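/- arXiv:math/0412438 — 3 statements merged into one kernel-verified Lean document; each statement's English description precedes it below -/
import Mathlib

section
/- For every d ≥ 3 there exists a semistable degree-d pair lying in the indeterminacy locus I(d), while for d = 2 no degree-2 pair in I(2) is semistable. (Thus the intersection of the semistable locus with I(d) in Ratbar_d is empty if and only if d = 2.) -/
noncomputable section

open MvPolynomial

/-- Polynomials in the two variables `z = X 0` and `w = X 1` over `ℂ`. -/
abbrev MvPoly2 : Type := MvPolynomial (Fin 2) ℂ

/-- A pair of polynomials, representing a point of `Ratbar_d` when both entries are
homogeneous of degree `d` and not both zero. -/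
abbrev Pair : Type := MvPoly2 × MvPoly2

/-- `f` is a degree-`d` pair: both entries homogeneous of degree `d`, not both zero. -/
def IsDegPair (d : ℕ) (f : Pair) : Prop :=
  f.1.IsHomogeneous d ∧ f.2.IsHomogeneous d ∧ f ≠ 0

/-- Composition of pairs: substitute the components of `g` into `f`. -/
def comp (f g : Pair) : Pair :=
  (aeval ![g.1, g.2] f.1, aeval ![g.1, g.2] f.2)

/-- The identity pair `(z, w)`. -/
def idPair : Pair := (X 0, X 1)

/-- Iterates: `iter f n = f^n`, the `n`-fold self-composition, with `f^0` the identity. -/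
def iter (f : Pair) : ℕ → Pair
  | 0 => idPair
  | n + 1 => comp f (iter f n)

/-- The linear form `β z - α w` vanishing at the point `(α : β)` of `ℙ¹`. -/
def linForm (v : ℂ × ℂ) : MvPoly2 := C v.2 * X 0 - C v.1 * X 1

/-- Order of vanishing of the linear form of `v` in a polynomial `P`. -/
def ord (v : ℂ × ℂ) (P : MvPoly2) : ℕ := sSup {n : ℕ | linForm v ^ n ∣ P}

/-- Depth of `v` as a hole of `f`: the multiplicity of `linForm v` in `gcd (f.1, f.2)`. -/
def depth (v : ℂ × ℂ) (f : Pair) : ℕ :=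
  sSup {n : ℕ | linForm v ^ n ∣ f.1 ∧ linForm v ^ n ∣ f.2}

/-- The homogeneous form `z Q - w P`, whose vanishing at `v` beyond the depth of the
hole detects that the reduced map fixes `v`. -/
def fixedForm (f : Pair) : MvPoly2 := X 0 * f.2 - X 1 * f.1

/-- `φ_f(v) = v` in the sense of the paper: the multiplicity of `v` as a root of
`z Q - w P` strictly exceeds the depth of `v` as a hole of `f`. -/
def FixedHole (v : ℂ × ℂ) (f : Pair) : Prop := depth v f < ord v (fixedForm f)

/-- Stability with cutoff `m`: all holes have depth at most `m` and no hole of depth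
exactly `m` is fixed by the reduced map. -/
def StableAt (m : ℕ) (f : Pair) : Prop :=
  f ≠ 0 ∧ ∀ v : ℂ × ℂ, v ≠ 0 →
    depth v f ≤ m ∧ (0 < depth v f → depth v f = m → ¬ FixedHole v f)

/-- GIT stability of a degree-`d` pair. -/
def Stable (d : ℕ) (f : Pair) : Prop :=
  if d % 2 = 0 then StableAt (d / 2) f else StableAt ((d - 1) / 2) f

/-- GIT semistability of a degree-`d` pair. -/
def Semistable (d : ℕ) (f : Pair) : Prop :=
  if d % 2 = 0 then StableAt (d / 2) f else StableAt ((d + 1) / 2) f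

/-- The indeterminacy locus: `f ∈ I(d)` iff `f ∘ f` is the zero pair. -/
def IsIndet (f : Pair) : Prop := comp f f = 0

/-- The degree-1 pair `(az + bw, cz + dw)` associated to a `2 × 2` matrix. -/
def matPair (A : Matrix (Fin 2) (Fin 2) ℂ) : Pair :=
  (C (A 0 0) * X 0 + C (A 0 1) * X 1, C (A 1 0) * X 0 + C (A 1 1) * X 1)

/-- Conjugacy of pairs: `g` is a nonzero scalar multiple of `A ∘ f ∘ A⁻¹` for some
`A ∈ GL₂(ℂ)`. -/
def Conjugate (f g : Pair) : Prop :=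
  ∃ A : Matrix.GeneralLinearGroup (Fin 2) ℂ, ∃ c : ℂ, c ≠ 0 ∧
    g = c • comp (matPair (A : Matrix (Fin 2) (Fin 2) ℂ))
        (comp f (matPair ((A⁻¹ : Matrix.GeneralLinearGroup (Fin 2) ℂ) : Matrix (Fin 2) (Fin 2) ℂ)))

/-!
For `d ≥ 3` put `m = ⌈d/2⌉` and take `f = (z^a w^e (z - w), 0)` with `a = d - m ≤ m` and
`e = m - 1 ≥ 1`. Its reduced map is the constant `(1 : 0)`, a hole of depth `e ≥ 1`, so `f ∘ f = 0`.
The holes `(0 : 1)`, `(1 : 0)`, `(1 : 1)` have depths `a ≤ m`, `e < m` and `1 < m`, and `(0 : 1)`,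
the only one that can reach depth `m`, is not fixed because `z Q - w P = -w P` vanishes there to
order exactly `a`.

For `d = 2`, a binary quadratic splits into linear forms over `ℂ`, so `P(P, Q) = 0` forces
`(P, Q) = (v₁ R, v₂ R)`. Then `f ∘ f = R(v) R² v`, so `v` is a root of `R`: a hole of depth `≥ 1`
which the reduced map, the constant `v`, fixes. The cutoff `1` of stability forbids this.
-/

lemma pow_dvd_pow_mul_iff {M : Type*} [CommMonoidWithZero M] [IsCancelMulZero M] {a b : M}
    (ha : a ≠ 0) (hb : ¬ a ∣ b) {n k : ℕ} : a ^ n ∣ a ^ k * b ↔ n ≤ k := by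
  refine ⟨fun h => ?_, fun h => (pow_dvd_pow a h).mul_right b⟩
  by_contra! hkn
  have : a ^ k * a ∣ a ^ k * b := (pow_succ a k ▸ pow_dvd_pow a hkn).trans h
  exact hb ((mul_dvd_mul_iff_left (pow_ne_zero k ha)).1 this)

lemma eval_linForm (u : ℂ × ℂ) (x : Fin 2 → ℂ) :
    eval x (linForm u) = u.2 * x 0 - u.1 * x 1 := by
  simp [linForm]

lemma aeval_linForm (u : ℂ × ℂ) (A B : MvPoly2) :
    aeval ![A, B] (linForm u) = C u.2 * A - C u.1 * B := by
  simp [linForm, algebraMap_eq]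

lemma linForm_smul (c : ℂ) (v : ℂ × ℂ) : linForm (c • v) = C c * linForm v := by
  simp only [linForm, Prod.smul_fst, Prod.smul_snd, smul_eq_mul, map_mul]
  ring

lemma linForm_ne_zero {v : ℂ × ℂ} (hv : v ≠ 0) : linForm v ≠ 0 := by
  intro h
  have h1 := congrArg (eval ![1, 0]) h
  have h2 := congrArg (eval ![0, 1]) h
  simp only [eval_linForm, map_zero] at h1 h2
  exact hv (Prod.ext (by simpa using h2) (by simpa using h1))

lemma linForm_not_isUnit (v : ℂ × ℂ) : ¬ IsUnit (linForm v) := fun h =>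
  (h.map (eval ![v.1, v.2])).ne_zero (by simp [eval_linForm, mul_comm])

lemma not_linForm_dvd_of_eval_ne_zero {v : ℂ × ℂ} {B : MvPoly2}
    (hB : eval ![v.1, v.2] B ≠ 0) : ¬ linForm v ∣ B := fun h =>
  hB (zero_dvd_iff.1 (by simpa [eval_linForm, mul_comm] using map_dvd (eval ![v.1, v.2]) h))

lemma exists_smul_eq_of_eval_linForm_eq_zero {u v : ℂ × ℂ} (hv : v ≠ 0)
    (h : eval ![v.1, v.2] (linForm u) = 0) : ∃ c : ℂ, u = c • v := by
  rw [eval_linForm] at h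
  simp only [Matrix.cons_val_zero, Matrix.cons_val_one] at h
  by_cases h1 : v.1 = 0
  · have h2 : v.2 ≠ 0 := fun h2 => hv (Prod.ext h1 h2)
    refine ⟨u.2 / v.2, Prod.ext ?_ ?_⟩
    · simp only [h1, mul_zero, zero_sub, neg_eq_zero, mul_eq_zero, h2, or_false] at h
      simp [h, h1]
    · simp [h2]
  · refine ⟨u.1 / v.1, Prod.ext ?_ ?_⟩
    · simp [h1]
    · simp only [Prod.smul_snd, smul_eq_mul]
      field_simp
      linear_combination h

lemma linForm_dvd_linForm {u v : ℂ × ℂ} (hv : v ≠ 0) (h : eval ![v.1, v.2] (linForm u) = 0) :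
    linForm v ∣ linForm u := by
  obtain ⟨c, rfl⟩ := exists_smul_eq_of_eval_linForm_eq_zero hv h
  exact linForm_smul c v ▸ dvd_mul_left _ _

lemma ord_linForm_pow_mul {v : ℂ × ℂ} (hv : v ≠ 0) {S : MvPoly2} (hS : ¬ linForm v ∣ S)
    (k : ℕ) : ord v (linForm v ^ k * S) = k := by
  simp only [ord, pow_dvd_pow_mul_iff (linForm_ne_zero hv) hS]
  exact csSup_Iic

lemma exists_eq_linForm_pow_ord_mul {v : ℂ × ℂ} (hv : v ≠ 0) {R : MvPoly2} (hR : R ≠ 0) :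
    ∃ S, R = linForm v ^ ord v R * S ∧ ¬ linForm v ∣ S := by
  obtain ⟨S, hRS, hS⟩ :=
    (FiniteMultiplicity.of_not_isUnit (linForm_not_isUnit v) hR).exists_eq_pow_mul_and_not_dvd
  have hord := ord_linForm_pow_mul hv hS (multiplicity (linForm v) R)
  rw [← hRS] at hord
  exact ⟨S, hord ▸ hRS, hS⟩

lemma ord_eq_zero_of_eval_ne_zero {v : ℂ × ℂ} (hv : v ≠ 0) {P : MvPoly2}
    (hP : eval ![v.1, v.2] P ≠ 0) : ord v P = 0 := by
  simpa using ord_linForm_pow_mul hv (not_linForm_dvd_of_eval_ne_zero hP) 0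

lemma ord_linForm_mul {v : ℂ × ℂ} (hv : v ≠ 0) {R : MvPoly2} (hR : R ≠ 0) :
    ord v (linForm v * R) = ord v R + 1 := by
  obtain ⟨S, hRS, hS⟩ := exists_eq_linForm_pow_ord_mul hv hR
  conv_lhs => rw [hRS, ← mul_assoc, ← pow_succ']
  exact ord_linForm_pow_mul hv hS _

lemma ord_smul {c : ℂ} (hc : c ≠ 0) (v : ℂ × ℂ) (P : MvPoly2) :
    ord (c • v) P = ord v P := by
  have hu : ∀ n : ℕ, IsUnit (C (c ^ n) : MvPoly2) := fun n =>
    (isUnit_iff_ne_zero.2 (pow_ne_zero n hc)).map C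
  simp only [ord, linForm_smul, mul_pow, ← map_pow, (hu _).mul_left_dvd]

lemma ord_neg (v : ℂ × ℂ) (P : MvPoly2) : ord v (-P) = ord v P := by
  simp only [ord, dvd_neg]

lemma depth_mk_zero (v : ℂ × ℂ) (P : MvPoly2) : depth v (P, 0) = ord v P := by
  simp only [depth, ord, dvd_zero, and_true]

lemma depth_C_mul_mk_C_mul {u : ℂ × ℂ} (hu : u ≠ 0) (v : ℂ × ℂ) (R : MvPoly2) :
    depth v (C u.1 * R, C u.2 * R) = ord v R := by
  have hdvd : ∀ {c : ℂ} {A : MvPoly2}, c ≠ 0 → (A ∣ C c * R ↔ A ∣ R) := fun hc =>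
    ((isUnit_iff_ne_zero.2 hc).map C).dvd_mul_left
  unfold depth ord
  congr 1
  ext n
  by_cases h1 : u.1 = 0
  · have h2 : u.2 ≠ 0 := fun h2 => hu (Prod.ext h1 h2)
    simp [h1, hdvd h2]
  · simp only [Set.mem_ofPred_eq, hdvd h1]
    exact ⟨And.left, fun h => ⟨h, h.mul_left _⟩⟩

lemma fixedForm_C_mul_mk_C_mul (u : ℂ × ℂ) (R : MvPoly2) :
    fixedForm (C u.1 * R, C u.2 * R) = linForm u * R := by
  simp only [fixedForm, linForm]
  ring

lemma semistable_iff_stableAt (d : ℕ) (f : Pair) :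
    Semistable d f ↔ StableAt ((d + 1) / 2) f := by
  unfold Semistable
  split_ifs with hd
  · rw [show d / 2 = (d + 1) / 2 by omega]
  · rfl

lemma exists_mul_eq_quadratic {K : Type*} [Field K] [IsAlgClosed K] (p₀ p₁ p₂ : K) :
    ∃ a b c d : K, p₀ = a * c ∧ p₁ = a * d + b * c ∧ p₂ = b * d := by
  by_cases h₀ : p₀ = 0
  · exact ⟨0, 1, p₁, p₂, by simp [h₀]⟩
  -- The form is `(z + b w) (p₀ z + (p₁ - b p₀) w)` for a root `b` of `p₀ t² - p₁ t + p₂`.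
  obtain ⟨b, hb⟩ := IsAlgClosed.exists_root
    (Polynomial.C p₀ * Polynomial.X ^ 2 + Polynomial.C (-p₁) * Polynomial.X + Polynomial.C p₂)
    (by rw [Polynomial.degree_quadratic h₀]; decide)
  simp only [Polynomial.IsRoot, Polynomial.eval_add, Polynomial.eval_mul, Polynomial.eval_C,
    Polynomial.eval_pow, Polynomial.eval_X] at hb
  exact ⟨1, b, p₀, p₁ - b * p₀, by ring, by ring, by linear_combination hb⟩

lemma exists_linForm_mul_linForm_eq (p₀ p₁ p₂ : ℂ) : ∃ u u' : ℂ × ℂ,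
    linForm u * linForm u' = C p₀ * X 0 ^ 2 + C p₁ * (X 0 * X 1) + C p₂ * X 1 ^ 2 := by
  obtain ⟨a, b, c, d, rfl, rfl, rfl⟩ := exists_mul_eq_quadratic p₀ p₁ p₂
  refine ⟨(-b, a), (-d, c), ?_⟩
  simp only [linForm, map_mul, map_add, map_neg]
  ring

lemma MvPolynomial.IsHomogeneous.exists_eq_quadratic {R : Type*} [CommSemiring R]
    {P : MvPolynomial (Fin 2) R} (hP : P.IsHomogeneous 2) : ∃ p₀ p₁ p₂ : R,
      P = C p₀ * X 0 ^ 2 + C p₁ * (X 0 * X 1) + C p₂ * X 1 ^ 2 := by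
  induction hP using IsWeightedHomogeneous.induction_on with
  | zero => exact ⟨0, 0, 0, by simp⟩
  | add p q _ _ hp hq =>
    obtain ⟨p₀, p₁, p₂, rfl⟩ := hp
    obtain ⟨q₀, q₁, q₂, rfl⟩ := hq
    exact ⟨p₀ + q₀, p₁ + q₁, p₂ + q₂, by simp only [map_add]; ring⟩
  | monomial s r hs =>
    have hs' : s 0 + s 1 = 2 := by simpa [Finsupp.weight_apply, Finsupp.sum_fintype] using hs
    rw [monomial_eq, Finsupp.prod_fintype _ _ (by simp), Fin.prod_univ_two]
    have : s 0 = 2 ∧ s 1 = 0 ∨ s 0 = 1 ∧ s 1 = 1 ∨ s 0 = 0 ∧ s 1 = 2 := by omega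
    rcases this with ⟨h0, h1⟩ | ⟨h0, h1⟩ | ⟨h0, h1⟩ <;> rw [h0, h1]
    · exact ⟨r, 0, 0, by simp⟩
    · exact ⟨0, r, 0, by simp⟩
    · exact ⟨0, 0, r, by simp⟩

lemma MvPolynomial.IsHomogeneous.exists_eq_linForm_mul_linForm {P : MvPoly2}
    (hP : P.IsHomogeneous 2) : ∃ u u' : ℂ × ℂ, P = linForm u * linForm u' := by
  obtain ⟨p₀, p₁, p₂, rfl⟩ := hP.exists_eq_quadratic
  obtain ⟨u, u', h⟩ := exists_linForm_mul_linForm_eq p₀ p₁ p₂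
  exact ⟨u, u', h.symm⟩

lemma linForm_dvd_of_eval_eq_zero {R : MvPoly2} (hR : R.IsHomogeneous 2) {v : ℂ × ℂ}
    (hv : v ≠ 0) (h : eval ![v.1, v.2] R = 0) : linForm v ∣ R := by
  obtain ⟨u, u', rfl⟩ := hR.exists_eq_linForm_mul_linForm
  rcases mul_eq_zero.1 ((map_mul _ _ _).symm.trans h) with h | h
  · exact (linForm_dvd_linForm hv h).mul_right _
  · exact (linForm_dvd_linForm hv h).mul_left _

lemma aeval_C_mul_C_mul_of_isHomogeneous {R : MvPoly2} (hR : R.IsHomogeneous 2) (v : ℂ × ℂ)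
    (S : MvPoly2) : aeval ![C v.1 * S, C v.2 * S] R = C (eval ![v.1, v.2] R) * S ^ 2 := by
  obtain ⟨u, u', rfl⟩ := hR.exists_eq_linForm_mul_linForm
  simp only [map_mul, aeval_linForm, eval_linForm, Matrix.cons_val_zero, Matrix.cons_val_one,
    map_sub]
  ring

lemma exists_eq_C_mul_of_aeval_self_eq_zero {P Q : MvPoly2} (hP : P.IsHomogeneous 2)
    (hP0 : P ≠ 0) (h : aeval ![P, Q] P = 0) : ∃ t : ℂ, Q = C t * P := by
  obtain ⟨u, u', hPu⟩ := hP.exists_eq_linForm_mul_linForm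
  have ne_zero_of_dvd : ∀ w : ℂ × ℂ, linForm w ∣ P → w ≠ 0 := by
    rintro w hw rfl
    exact hP0 (zero_dvd_iff.1 (by simpa [linForm] using hw))
  have of_relation : ∀ w : ℂ × ℂ, linForm w ∣ P → C w.2 * P - C w.1 * Q = 0 →
      ∃ t : ℂ, Q = C t * P := by
    intro w hw hPQ
    have hw1 : w.1 ≠ 0 := by
      intro hw1
      simp only [hw1, map_zero, zero_mul, sub_zero, mul_eq_zero, C_eq_zero, hP0, or_false] at hPQ
      exact ne_zero_of_dvd w hw (Prod.ext hw1 hPQ)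
    refine ⟨w.2 / w.1, mul_left_cancel₀ (C_ne_zero.2 hw1) ?_⟩
    rw [← mul_assoc, ← map_mul, mul_div_cancel₀ _ hw1]
    linear_combination -hPQ
  have h' : aeval ![P, Q] (linForm u * linForm u') = 0 := by rwa [← hPu]
  rw [map_mul, aeval_linForm, aeval_linForm] at h'
  rcases mul_eq_zero.1 h' with h' | h'
  · exact of_relation u (hPu ▸ dvd_mul_right _ _) h'
  · exact of_relation u' (hPu ▸ dvd_mul_left _ _) h'

lemma exists_eq_C_mul_mk_C_mul_of_isIndet {f : Pair} (hf : IsDegPair 2 f) (hI : IsIndet f) :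
    ∃ v : ℂ × ℂ, v ≠ 0 ∧ ∃ R : MvPoly2, R ≠ 0 ∧ R.IsHomogeneous 2 ∧
      f = (C v.1 * R, C v.2 * R) := by
  obtain ⟨P, Q⟩ := f
  obtain ⟨hP, hQ, hf0⟩ := hf
  dsimp only at hP hQ
  by_cases hP0 : P = 0
  · subst hP0
    exact ⟨(0, 1), by simp, Q, fun hQ0 => hf0 (by simp [hQ0]), hQ, by simp⟩
  · obtain ⟨t, rfl⟩ := exists_eq_C_mul_of_aeval_self_eq_zero hP hP0 (congrArg Prod.fst hI)
    exact ⟨(1, t), by simp, P, hP0, hP, by simp⟩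

lemma eval_eq_zero_of_isIndet {v : ℂ × ℂ} (hv : v ≠ 0) {R : MvPoly2} (hR0 : R ≠ 0)
    (hR : R.IsHomogeneous 2) (hI : IsIndet (C v.1 * R, C v.2 * R)) :
    eval ![v.1, v.2] R = 0 := by
  simp only [IsIndet, comp, map_mul, aeval_C, algebraMap_eq,
    aeval_C_mul_C_mul_of_isHomogeneous hR, Prod.mk_eq_zero] at hI
  by_contra h
  simp only [mul_eq_zero, C_eq_zero, h, hR0, pow_eq_zero_iff, ne_eq, OfNat.ofNat_ne_zero,
    not_false_eq_true, or_false] at hI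
  exact hv (Prod.ext hI.1 hI.2)

lemma not_stableAt_one_of_isIndet {f : Pair} (hf : IsDegPair 2 f) (hI : IsIndet f) :
    ¬ StableAt 1 f := by
  obtain ⟨v, hv, R, hR0, hR, rfl⟩ := exists_eq_C_mul_mk_C_mul_of_isIndet hf hI
  have hvR : linForm v ∣ R :=
    linForm_dvd_of_eval_eq_zero hR hv (eval_eq_zero_of_isIndet hv hR0 hR hI)
  have hpos : 0 < ord v R := by
    obtain ⟨S, hRS, hS⟩ := exists_eq_linForm_pow_ord_mul hv hR0
    refine Nat.pos_of_ne_zero fun h0 => hS ?_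
    rw [h0, pow_zero, one_mul] at hRS
    exact hRS ▸ hvR
  -- The reduced map of `(v.1 R, v.2 R)` is the constant `v`, so the hole `v` is fixed.
  have hfix : FixedHole v (C v.1 * R, C v.2 * R) := by
    rw [FixedHole, depth_C_mul_mk_C_mul hv, fixedForm_C_mul_mk_C_mul, ord_linForm_mul hv hR0]
    exact Nat.lt_succ_self _
  rintro ⟨-, hst⟩
  obtain ⟨hle, hnotfix⟩ := hst v hv
  rw [depth_C_mul_mk_C_mul hv] at hle hnotfix
  exact hnotfix hpos (by omega) hfix

def witnessForm (a e : ℕ) : MvPoly2 := X 0 ^ a * X 1 ^ e * (X 0 - X 1)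

lemma witnessForm_isHomogeneous (a e : ℕ) : (witnessForm a e).IsHomogeneous (a + e + 1) := by
  have h := (((isHomogeneous_X ℂ (0 : Fin 2)).pow a).mul ((isHomogeneous_X ℂ 1).pow e)).mul
    ((isHomogeneous_X ℂ 0).sub (isHomogeneous_X ℂ 1))
  simpa only [witnessForm, one_mul] using h

lemma eval_witnessForm (a e : ℕ) (x : Fin 2 → ℂ) :
    eval x (witnessForm a e) = x 0 ^ a * x 1 ^ e * (x 0 - x 1) := by
  simp [witnessForm]

lemma witnessForm_ne_zero (a e : ℕ) : witnessForm a e ≠ 0 := fun h => by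
  have h21 := congrArg (eval ![2, 1]) h
  norm_num [eval_witnessForm] at h21

lemma isIndet_witnessForm_mk_zero (a : ℕ) {e : ℕ} (he : e ≠ 0) :
    IsIndet (witnessForm a e, 0) := by
  simp [IsIndet, comp, witnessForm, zero_pow he]

lemma fixedForm_witnessForm_mk_zero (a e : ℕ) :
    fixedForm (witnessForm a e, 0) = -witnessForm a (e + 1) := by
  simp only [fixedForm, witnessForm]
  ring

lemma ord_witnessForm_zero_one (a e : ℕ) : ord (0, 1) (witnessForm a e) = a := by
  have h : witnessForm a e = linForm (0, 1) ^ a * (X 1 ^ e * (X 0 - X 1)) := by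
    simp only [witnessForm, linForm, map_zero, map_one]
    ring
  rw [h, ord_linForm_pow_mul (by simp) (not_linForm_dvd_of_eval_ne_zero (by simp))]

lemma ord_witnessForm_neg_one_zero (a e : ℕ) : ord (-1, 0) (witnessForm a e) = e := by
  have h : witnessForm a e = linForm (-1, 0) ^ e * (X 0 ^ a * (X 0 - X 1)) := by
    simp only [witnessForm, linForm, map_zero, map_neg, map_one]
    ring
  rw [h, ord_linForm_pow_mul (by simp) (not_linForm_dvd_of_eval_ne_zero (by simp))]

lemma ord_witnessForm_one_one (a e : ℕ) : ord (1, 1) (witnessForm a e) = 1 := by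
  have h : witnessForm a e = linForm (1, 1) ^ 1 * (X 0 ^ a * X 1 ^ e) := by
    simp only [witnessForm, linForm, map_one]
    ring
  rw [h, ord_linForm_pow_mul (by simp) (not_linForm_dvd_of_eval_ne_zero (by simp))]

lemma eq_smul_or_eval_witnessForm_ne_zero {v : ℂ × ℂ} (hv : v ≠ 0) (a e : ℕ) :
    (∃ c : ℂ, c ≠ 0 ∧ v = c • (0, 1)) ∨ (∃ c : ℂ, c ≠ 0 ∧ v = c • (-1, 0)) ∨
      (∃ c : ℂ, c ≠ 0 ∧ v = c • (1, 1)) ∨ eval ![v.1, v.2] (witnessForm a e) ≠ 0 := by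
  obtain ⟨x, y⟩ := v
  by_cases hx : x = 0
  · exact Or.inl ⟨y, fun hy => hv (by simp [hx, hy]), by simp [hx]⟩
  by_cases hy : y = 0
  · exact Or.inr (Or.inl ⟨-x, neg_ne_zero.2 hx, by simp [hy]⟩)
  by_cases hxy : x = y
  · exact Or.inr (Or.inr (Or.inl ⟨x, hx, by simp [hxy]⟩))
  · refine Or.inr (Or.inr (Or.inr ?_))
    simp [eval_witnessForm, hx, hy, sub_ne_zero.2 hxy]

lemma stableAt_witnessForm_mk_zero {m a e : ℕ} (hm : 1 < m) (ha : a ≤ m) (he : e < m) :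
    StableAt m (witnessForm a e, 0) := by
  refine ⟨by simp [witnessForm_ne_zero], fun v hv => ?_⟩
  simp only [FixedHole, depth_mk_zero, fixedForm_witnessForm_mk_zero, ord_neg]
  rcases eq_smul_or_eval_witnessForm_ne_zero hv a e with
    ⟨c, hc, rfl⟩ | ⟨c, hc, rfl⟩ | ⟨c, hc, rfl⟩ | hne
  · simp only [ord_smul hc, ord_witnessForm_zero_one]
    exact ⟨ha, fun _ _ => lt_irrefl a⟩
  · simp only [ord_smul hc, ord_witnessForm_neg_one_zero]
    omega
  · simp only [ord_smul hc, ord_witnessForm_one_one]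
    omega
  · simp only [ord_eq_zero_of_eval_ne_zero hv hne]
    omega

/-- For every `d ≥ 3` there is a semistable degree-`d` pair in the indeterminacy locus
`I(d)`, while no degree-2 pair in `I(2)` is semistable. -/
theorem semistable_indeterminacy_iff_degree_ne_two :
    (∀ d : ℕ, 3 ≤ d → ∃ f : Pair, IsDegPair d f ∧ IsIndet f ∧ Semistable d f) ∧
    (∀ f : Pair, IsDegPair 2 f → IsIndet f → ¬ Semistable 2 f) := by
  refine ⟨fun d hd => ?_, fun f hf hI hss =>
    not_stableAt_one_of_isIndet hf hI ((semistable_iff_stableAt 2 f).1 hss)⟩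
  set m := (d + 1) / 2
  obtain ⟨a, e, hd, ha, he⟩ : ∃ a e : ℕ, a + e + 1 = d ∧ a ≤ m ∧ e + 1 = m :=
    ⟨d - m, m - 1, by omega, by omega, by omega⟩
  refine ⟨(witnessForm a e, 0), ?_, isIndet_witnessForm_mk_zero a (by omega), ?_⟩
  · exact ⟨hd ▸ witnessForm_isHomogeneous a e, isHomogeneous_zero _ _ _,
      by simp [witnessForm_ne_zero]⟩
  · exact (semistable_iff_stableAt d _).2 (stableAt_witnessForm_mk_zero (by omega) ha (by omega))
end
end

section
/- Fix integers n ≥ q ≥ 2. For τ ∈ ℂ with τ ≠ 0, let A_τ be the degree-1 pair (τ⁻¹·z + τ⁻¹·w, w) (the Möbius map A_τ(z:w) = (τ⁻¹(z+w) : w)), with inverse pair A_τ⁻¹ = (τ·z − w, w). Then there exist nonzero scalars λ_τ ∈ ℂ such that every coefficient of the pair λ_τ·(A_τ ∘ F_{q,τ,n} ∘ A_τ⁻¹) converges, as |τ| → ∞, to the corresponding coefficient of P_{q,n}. -/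
noncomputable section

open MvPolynomial

/-- The pairs `F_{q,τ,n}` for `0 ≤ n ≤ q`. -/
def Fbase (q : ℕ) (τ : ℂ) (n : ℕ) : Pair :=
  if n = 0 then idPair
  else if n < q then (X 0 ^ 2 ^ (n - 1) * X 1 ^ 2 ^ (n - 1), 0)
  else (X 0 ^ (2 ^ (q - 1) - 1) * X 1 ^ (2 ^ (q - 1) - 1) *
          (X 0 ^ 2 + C τ * X 0 * X 1 + X 1 ^ 2),
        X 0 ^ 2 ^ (q - 1) * X 1 ^ 2 ^ (q - 1))

/-- The pairs `F_{q,τ,n}`: for `n > q`, `F_{q,τ,n} = F_{q,τ,(n mod q)} ∘ (F_{q,τ,q})^{⌊n/q⌋}`. -/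
def FF (q : ℕ) (τ : ℂ) (n : ℕ) : Pair :=
  if n ≤ q then Fbase q τ n
  else comp (Fbase q τ (n % q)) (iter (Fbase q τ q) (n / q))

/-- The pairs `P_{q,n}` for `0 ≤ n ≤ q`. -/
def Pbase (q : ℕ) (n : ℕ) : Pair :=
  if n = 0 then idPair
  else if n < q then (X 0 ^ 2 ^ (n - 1) * X 1 ^ 2 ^ (n - 1), 0)
  else (X 0 ^ 2 ^ (q - 1) * X 1 ^ (2 ^ (q - 1) - 1) * (X 0 + X 1),
        X 0 ^ 2 ^ (q - 1) * X 1 ^ 2 ^ (q - 1))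

/-- The pairs `P_{q,n}`: for `n > q`, `P_{q,n} = P_{q,(n mod q)} ∘ (P_{q,q})^{⌊n/q⌋}`. -/
def PP (q : ℕ) (n : ℕ) : Pair :=
  if n ≤ q then Pbase q n
  else comp (Pbase q (n % q)) (iter (Pbase q q) (n / q))

/-- The degree-1 pair of the Möbius map `A_τ(z:w) = (τ⁻¹ (z + w) : w)`. -/
def Apair (τ : ℂ) : Pair := (C τ⁻¹ * X 0 + C τ⁻¹ * X 1, X 1)

/-- The degree-1 pair of the inverse Möbius map `A_τ⁻¹(z:w) = (τ z - w : w)`. -/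
def ApairInv (τ : ℂ) : Pair := (C τ * X 0 - X 1, X 1)


/-! Conjugation by `A_τ` commutes with composition, so `A_τ ∘ F_{q,τ,n} ∘ A_τ⁻¹` is the same
composite of the conjugated building blocks `A_τ ∘ F_{q,τ,r} ∘ A_τ⁻¹`. An explicit computation
shows that each block is a power of `τ` times a pair whose coefficients are polynomials in `τ⁻¹`
and which equals `P_{q,r}` at `τ⁻¹ = 0`. Scalars pass through composition with a homogeneous
pair (`f ∘ (c • g) = c ^ deg f • (f ∘ g)`), and coefficientwise limits pass through composition
when the outer pairs have bounded degree, so the rescaled blocks compose to `P_{q,n}`. -/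

open Filter Topology Bornology

section

variable {α σ ι R : Type*} [CommSemiring R]

lemma MvPolynomial.coeff_aeval_eq_sum {S : Finset (σ →₀ ℕ)} {p : MvPolynomial σ R}
    (hS : p.support ⊆ S) (g : σ → MvPolynomial ι R) (m : ι →₀ ℕ) :
    coeff m (aeval g p) = ∑ s ∈ S, coeff s p * coeff m (∏ i ∈ s.support, g i ^ s i) := by
  rw [aeval_def, eval₂_eq, coeff_sum, Finset.sum_subset hS]
  · simp only [algebraMap_eq, coeff_C_mul]
  · intro s _ hs
    rw [notMem_support_iff.mp hs, map_zero, zero_mul, coeff_zero]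

variable [TopologicalSpace R]

def TendstoCoeffwise (l : Filter α) (p : α → MvPolynomial σ R) (P : MvPolynomial σ R) : Prop :=
  ∀ m, Tendsto (fun x => coeff m (p x)) l (𝓝 (coeff m P))

namespace TendstoCoeffwise

variable {l : Filter α} {p q : α → MvPolynomial σ R} {P Q : MvPolynomial σ R}

lemma const (P : MvPolynomial σ R) : TendstoCoeffwise l (fun _ => P) P :=
  fun _ => tendsto_const_nhds

lemma C {c : α → R} {c₀ : R} (hc : Tendsto c l (𝓝 c₀)) :
    TendstoCoeffwise l (fun x => C (c x)) (C c₀ : MvPolynomial σ R) := by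
  classical
  intro m
  simp only [coeff_C]
  split_ifs
  exacts [hc, tendsto_const_nhds]

lemma congr' (h : p =ᶠ[l] q) (hp : TendstoCoeffwise l p P) : TendstoCoeffwise l q P :=
  fun m => (hp m).congr' (h.mono fun _ hx => by rw [hx])

lemma support_subset [T2Space R] [l.NeBot] {S : Finset (σ →₀ ℕ)} (hp : TendstoCoeffwise l p P)
    (hS : ∀ᶠ x in l, (p x).support ⊆ S) : P.support ⊆ S := by
  intro s hs
  by_contra hsS
  have hzero : Tendsto (fun x => coeff s (p x)) l (𝓝 0) :=
    tendsto_const_nhds.congr' <| hS.mono fun x hx =>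
      (notMem_support_iff.mp fun h => hsS (hx h)).symm
  exact mem_support_iff.mp hs (tendsto_nhds_unique (hp s) hzero)

variable [IsTopologicalSemiring R]

lemma add (hp : TendstoCoeffwise l p P) (hq : TendstoCoeffwise l q Q) :
    TendstoCoeffwise l (fun x => p x + q x) (P + Q) := fun m => by
  simpa only [coeff_add] using (hp m).add (hq m)

lemma mul (hp : TendstoCoeffwise l p P) (hq : TendstoCoeffwise l q Q) :
    TendstoCoeffwise l (fun x => p x * q x) (P * Q) := fun m => by
  classical
  simp only [coeff_mul]
  exact tendsto_finsetSum _ fun k _ => (hp k.1).mul (hq k.2)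

lemma pow (hp : TendstoCoeffwise l p P) (k : ℕ) :
    TendstoCoeffwise l (fun x => p x ^ k) (P ^ k) := by
  induction k with
  | zero => simpa only [pow_zero] using const 1
  | succ k ih => simpa only [pow_succ] using ih.mul hp

lemma finset_prod {s : Finset ι} {p : ι → α → MvPolynomial σ R} {P : ι → MvPolynomial σ R}
    (hp : ∀ i ∈ s, TendstoCoeffwise l (p i) (P i)) :
    TendstoCoeffwise l (fun x => ∏ i ∈ s, p i x) (∏ i ∈ s, P i) := by
  classical
  induction s using Finset.induction_on with
  | empty => simpa only [Finset.prod_empty] using const 1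
  | insert i s hi ih =>
    simp only [Finset.prod_insert hi]
    exact (hp i (Finset.mem_insert_self i s)).mul
      (ih fun j hj => hp j (Finset.mem_insert_of_mem hj))

lemma aeval [T2Space R] [l.NeBot] {S : Finset (σ →₀ ℕ)}
    {g : α → σ → MvPolynomial ι R} {G : σ → MvPolynomial ι R}
    (hp : TendstoCoeffwise l p P) (hS : ∀ᶠ x in l, (p x).support ⊆ S)
    (hg : ∀ i, TendstoCoeffwise l (fun x => g x i) (G i)) :
    TendstoCoeffwise l (fun x => aeval (g x) (p x)) (aeval G P) := by
  intro m
  rw [coeff_aeval_eq_sum (hp.support_subset hS)]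
  refine Tendsto.congr' (hS.mono fun x hx => (coeff_aeval_eq_sum hx (g x) m).symm) ?_
  exact tendsto_finsetSum _ fun s _ =>
    (hp s).mul ((finset_prod fun i _ => (hg i).pow (s i)) m)

end TendstoCoeffwise

end

lemma TendstoCoeffwise.sub {α σ R : Type*} [CommRing R] [TopologicalSpace R] [IsTopologicalRing R]
    {l : Filter α} {p q : α → MvPolynomial σ R} {P Q : MvPolynomial σ R}
    (hp : TendstoCoeffwise l p P) (hq : TendstoCoeffwise l q Q) :
    TendstoCoeffwise l (fun x => p x - q x) (P - Q) := fun m => by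
  simpa only [coeff_sub] using (hp m).sub (hq m)

section Homogeneous

variable {σ R S : Type*} [CommSemiring R] [CommSemiring S] [Algebra R S]
  {φ : MvPolynomial σ R} {n : ℕ}

lemma MvPolynomial.IsHomogeneous.support_subset_finsuppAntidiag [Fintype σ] [DecidableEq σ]
    (hφ : φ.IsHomogeneous n) : φ.support ⊆ Finset.finsuppAntidiag Finset.univ n := by
  intro s hs
  rw [Finset.mem_finsuppAntidiag, ← Finsupp.degree_eq_sum, Finsupp.degree_apply,
    ← hφ.degree_eq_sum_deg_support hs]
  exact ⟨rfl, Finset.subset_univ _⟩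

lemma MvPolynomial.IsHomogeneous.aeval_const_mul (hφ : φ.IsHomogeneous n) (c : S)
    (g : σ → S) : MvPolynomial.aeval (fun i => c * g i) φ = c ^ n * MvPolynomial.aeval g φ := by
  simp only [aeval_def, eval₂_eq, Finset.mul_sum]
  refine Finset.sum_congr rfl fun s hs => ?_
  simp only [mul_pow, Finset.prod_mul_distrib, Finset.prod_pow_eq_pow_sum,
    ← hφ.degree_eq_sum_deg_support hs]
  ring

end Homogeneous

def IsHomogeneousPair (d : ℕ) (f : Pair) : Prop :=
  f.1.IsHomogeneous d ∧ f.2.IsHomogeneous d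

lemma isHomogeneousPair_idPair : IsHomogeneousPair 1 idPair :=
  ⟨isHomogeneous_X ℂ 0, isHomogeneous_X ℂ 1⟩

lemma IsHomogeneousPair.smul {d : ℕ} {f : Pair} (hf : IsHomogeneousPair d f) (c : ℂ) :
    IsHomogeneousPair d (c • f) := by
  simpa only [IsHomogeneousPair, Prod.smul_fst, Prod.smul_snd, smul_eq_C_mul, zero_add] using
    And.intro ((isHomogeneous_C _ c).mul hf.1) ((isHomogeneous_C _ c).mul hf.2)

lemma comp_assoc (f g h : Pair) : comp (comp f g) h = comp f (comp g h) := by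
  have hv : (![aeval ![h.1, h.2] g.1, aeval ![h.1, h.2] g.2] : Fin 2 → MvPoly2)
      = fun i => aeval ![h.1, h.2] (![g.1, g.2] i) := by
    funext i; fin_cases i <;> rfl
  simp only [comp, comp_aeval_apply, hv]

lemma idPair_comp (g : Pair) : comp idPair g = g := by
  simp [comp, idPair]

lemma smul_comp (c : ℂ) (f g : Pair) : comp (c • f) g = c • comp f g := by
  simp [comp, map_smul]

lemma IsHomogeneousPair.comp_smul {d : ℕ} {f : Pair} (hf : IsHomogeneousPair d f) (c : ℂ)
    (g : Pair) : comp f (c • g) = c ^ d • comp f g := by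
  have hv : (![(c • g).1, (c • g).2] : Fin 2 → MvPoly2) = fun i => C c * ![g.1, g.2] i := by
    funext i; fin_cases i <;> simp [smul_eq_C_mul]
  rw [comp, comp, hv, hf.1.aeval_const_mul, hf.2.aeval_const_mul, Prod.smul_mk, ← map_pow,
    smul_eq_C_mul, smul_eq_C_mul]

lemma IsHomogeneousPair.comp {d e : ℕ} {f g : Pair} (hf : IsHomogeneousPair d f)
    (hg : IsHomogeneousPair e g) : IsHomogeneousPair (e * d) (comp f g) := by
  have hg' : ∀ i, (![g.1, g.2] i).IsHomogeneous e := Fin.forall_fin_two.mpr hg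
  exact ⟨hf.1.aeval _ hg', hf.2.aeval _ hg'⟩

section Conj

variable {A B : Pair}

def conj (A B f : Pair) : Pair := comp A (comp f B)

lemma conj_comp (hBA : comp B A = idPair) (f g : Pair) :
    conj A B (comp f g) = comp (conj A B f) (conj A B g) := by
  simp only [conj, comp_assoc]
  rw [← comp_assoc B A, hBA, idPair_comp]

lemma conj_iter (hAB : comp A B = idPair) (hBA : comp B A = idPair) (f : Pair) (k : ℕ) :
    conj A B (iter f k) = iter (conj A B f) k := by
  induction k with
  | zero => rw [iter, iter, conj, idPair_comp, hAB]
  | succ k ih => rw [iter, iter, conj_comp hBA, ih]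

lemma IsHomogeneousPair.conj {d : ℕ} {f : Pair} (hf : IsHomogeneousPair d f)
    (hA : IsHomogeneousPair 1 A) (hB : IsHomogeneousPair 1 B) :
    IsHomogeneousPair d (conj A B f) := by
  have := hA.comp (hf.comp hB)
  rwa [one_mul, mul_one] at this

end Conj

section ProjTendsto

variable {α : Type*} {l : Filter α} {f g : α → Pair} {F G : Pair}

def PairTendsto (l : Filter α) (f : α → Pair) (P : Pair) : Prop :=
  TendstoCoeffwise l (fun x => (f x).1) P.1 ∧ TendstoCoeffwise l (fun x => (f x).2) P.2

lemma PairTendsto.congr' (h : f =ᶠ[l] g) (hf : PairTendsto l f F) : PairTendsto l g F :=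
  ⟨hf.1.congr' (h.mono fun _ hx => by rw [hx]), hf.2.congr' (h.mono fun _ hx => by rw [hx])⟩

lemma PairTendsto.comp [l.NeBot] {d : ℕ} (hom : ∀ᶠ x in l, IsHomogeneousPair d (f x))
    (hf : PairTendsto l f F) (hg : PairTendsto l g G) :
    PairTendsto l (fun x => comp (f x) (g x)) (comp F G) := by
  have hg' : ∀ i, TendstoCoeffwise l (fun x => ![(g x).1, (g x).2] i) (![G.1, G.2] i) :=
    Fin.forall_fin_two.mpr hg
  exact ⟨hf.1.aeval (hom.mono fun _ hx => hx.1.support_subset_finsuppAntidiag) hg',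
    hf.2.aeval (hom.mono fun _ hx => hx.2.support_subset_finsuppAntidiag) hg'⟩

-- `[f x] → [P]` for pairs taken up to a nonzero scalar.
def ProjTendsto (l : Filter α) (f : α → Pair) (P : Pair) : Prop :=
  ∃ lam : α → ℂ, (∀ x, lam x ≠ 0) ∧ PairTendsto l (fun x => lam x • f x) P

namespace ProjTendsto

lemma congr' (h : f =ᶠ[l] g) (hf : ProjTendsto l f F) : ProjTendsto l g F := by
  obtain ⟨lam, hlam, hconv⟩ := hf
  exact ⟨lam, hlam, hconv.congr' (h.mono fun x hx => by rw [hx])⟩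

lemma of_eventually_eq_smul {c : α → ℂ} (h : ∀ᶠ x in l, c x ≠ 0 ∧ f x = c x • g x)
    (hg : PairTendsto l g G) : ProjTendsto l f G := by
  classical
  refine ⟨fun x => if c x = 0 then 1 else (c x)⁻¹, fun x => ?_, hg.congr' ?_⟩
  · dsimp only
    split_ifs with hc
    exacts [one_ne_zero, inv_ne_zero hc]
  · filter_upwards [h] with x ⟨hc, hfx⟩
    rw [if_neg hc, hfx, smul_smul, inv_mul_cancel₀ hc, one_smul]

lemma comp [l.NeBot] {d : ℕ} (hom : ∀ᶠ x in l, IsHomogeneousPair d (f x))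
    (hf : ProjTendsto l f F) (hg : ProjTendsto l g G) :
    ProjTendsto l (fun x => comp (f x) (g x)) (comp F G) := by
  obtain ⟨lam, hlam, hf⟩ := hf
  obtain ⟨mu, hmu, hg⟩ := hg
  refine ⟨fun x => lam x * mu x ^ d, fun x => mul_ne_zero (hlam x) (pow_ne_zero d (hmu x)),
    (hf.comp (hom.mono fun x hx => hx.smul (lam x)) hg).congr' ?_⟩
  filter_upwards [hom] with x hx
  rw [smul_comp, hx.comp_smul, smul_smul]

lemma iter [l.NeBot] {d : ℕ} (hom : ∀ᶠ x in l, IsHomogeneousPair d (f x))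
    (hf : ProjTendsto l f F) (k : ℕ) : ProjTendsto l (fun x => iter (f x) k) (iter F k) := by
  induction k with
  | zero =>
    refine of_eventually_eq_smul (c := fun _ => 1) (g := fun _ => idPair)
      (Eventually.of_forall fun x => ⟨one_ne_zero, ?_⟩) ⟨.const _, .const _⟩
    rw [one_smul, _root_.iter]
  | succ k ih => exact hf.comp hom ih

end ProjTendsto

end ProjTendsto

section Mobius

variable {τ : ℂ}

lemma C_mul_C_inv (hτ : τ ≠ 0) : (C τ * C τ⁻¹ : MvPoly2) = 1 := by
  rw [← C_mul, mul_inv_cancel₀ hτ, C_1]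

lemma comp_Apair_ApairInv (hτ : τ ≠ 0) : comp (Apair τ) (ApairInv τ) = idPair := by
  simp only [comp, Apair, ApairInv, idPair, map_add, map_mul, aeval_C, aeval_X,
    Matrix.cons_val_zero, Matrix.cons_val_one, algebraMap_eq, Prod.mk.injEq, and_true]
  linear_combination (X 0 : MvPoly2) * C_mul_C_inv hτ

lemma comp_ApairInv_Apair (hτ : τ ≠ 0) : comp (ApairInv τ) (Apair τ) = idPair := by
  simp only [comp, Apair, ApairInv, idPair, map_sub, map_mul, aeval_C, aeval_X,
    Matrix.cons_val_zero, Matrix.cons_val_one, algebraMap_eq, Prod.mk.injEq, and_true]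
  linear_combination ((X 0 : MvPoly2) + X 1) * C_mul_C_inv hτ

lemma isHomogeneousPair_Apair (τ : ℂ) : IsHomogeneousPair 1 (Apair τ) :=
  ⟨(isHomogeneous_C_mul_X _ 0).add (isHomogeneous_C_mul_X _ 1), isHomogeneous_X ℂ 1⟩

lemma isHomogeneousPair_ApairInv (τ : ℂ) : IsHomogeneousPair 1 (ApairInv τ) :=
  ⟨(isHomogeneous_C_mul_X _ 0).sub (isHomogeneous_X ℂ 1), isHomogeneous_X ℂ 1⟩

end Mobius

lemma exists_isHomogeneousPair_Fbase (q r : ℕ) :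
    ∃ d, ∀ τ, IsHomogeneousPair d (Fbase q τ r) := by
  have hX (a : ℕ) : (X 0 ^ a * X 1 ^ a : MvPoly2).IsHomogeneous (a + a) :=
    (isHomogeneous_X_pow 0 a).mul (isHomogeneous_X_pow 1 a)
  by_cases hr0 : r = 0
  · refine ⟨1, fun τ => ?_⟩
    rw [Fbase, if_pos hr0]
    exact isHomogeneousPair_idPair
  by_cases hrq : r < q
  · refine ⟨2 ^ (r - 1) + 2 ^ (r - 1), fun τ => ?_⟩
    rw [Fbase, if_neg hr0, if_pos hrq]
    exact ⟨hX _, isHomogeneous_zero _ _ _⟩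
  refine ⟨2 ^ (q - 1) + 2 ^ (q - 1), fun τ => ?_⟩
  rw [Fbase, if_neg hr0, if_neg hrq]
  have hquad : (X 0 ^ 2 + C τ * X 0 * X 1 + X 1 ^ 2 : MvPoly2).IsHomogeneous 2 :=
    ((isHomogeneous_X_pow 0 2).add ((isHomogeneous_C_mul_X τ 0).mul (isHomogeneous_X ℂ 1))).add
      (isHomogeneous_X_pow 1 2)
  have hdeg : 2 ^ (q - 1) - 1 + (2 ^ (q - 1) - 1) + 2 = 2 ^ (q - 1) + 2 ^ (q - 1) := by
    have := Nat.one_le_two_pow (n := q - 1)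
    omega
  exact ⟨hdeg ▸ (hX _).mul hquad, hX _⟩

lemma exists_isHomogeneousPair_conj_Fbase (q r : ℕ) :
    ∃ d, ∀ τ, IsHomogeneousPair d (conj (Apair τ) (ApairInv τ) (Fbase q τ r)) := by
  obtain ⟨d, hd⟩ := exists_isHomogeneousPair_Fbase q r
  exact ⟨d, fun τ => (hd τ).conj (isHomogeneousPair_Apair τ) (isHomogeneousPair_ApairInv τ)⟩

section Families

-- With `u = τ⁻¹`, `z - u w` is `τ⁻¹` times the first entry `τ z - w` of `A_τ⁻¹`.

def rescaledConjLow (r : ℕ) (u : ℂ) : Pair :=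
  (((X 0 - C u * X 1) * X 1) ^ 2 ^ (r - 1), 0)

def rescaledConjTop (q : ℕ) (u : ℂ) : Pair :=
  (((X 0 - C u * X 1) * X 1) ^ (2 ^ (q - 1) - 1) *
      ((X 0 - C u * X 1) * (X 0 + X 1) + C u ^ 2 * X 1 ^ 2),
    ((X 0 - C u * X 1) * X 1) ^ 2 ^ (q - 1))

variable {q r : ℕ} {τ : ℂ}

lemma conj_Fbase_of_lt (hr0 : r ≠ 0) (hrq : r < q) (hτ : τ ≠ 0) :
    conj (Apair τ) (ApairInv τ) (Fbase q τ r) =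
      τ ^ (2 ^ (r - 1) - 1) • rescaledConjLow r τ⁻¹ := by
  have h1 := C_mul_C_inv hτ
  simp only [conj, Apair, ApairInv, Fbase, rescaledConjLow, if_neg hr0, if_pos hrq, comp,
    map_mul, map_pow, map_add, aeval_X, aeval_C, Matrix.cons_val_zero, Matrix.cons_val_one,
    algebraMap_eq, Prod.smul_mk, smul_eq_C_mul, Prod.mk.injEq, map_zero, mul_zero, add_zero,
    and_true]
  generalize hY : (X 0 - C τ⁻¹ * X 1 : MvPoly2) = Y
  obtain ⟨e, he⟩ : ∃ e, 2 ^ (r - 1) = e + 1 := Nat.exists_eq_add_one.mpr (Nat.two_pow_pos _)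
  have hZ : (C τ * X 0 - X 1 : MvPoly2) = C τ * Y := by
    linear_combination (X 1 : MvPoly2) * h1 + C τ * hY
  rw [hZ, he, Nat.add_sub_cancel]
  linear_combination (C τ ^ e * Y ^ (e + 1) * X 1 ^ (e + 1)) * h1

lemma conj_Fbase_of_le (hr0 : r ≠ 0) (hqr : q ≤ r) (hτ : τ ≠ 0) :
    conj (Apair τ) (ApairInv τ) (Fbase q τ r) = τ ^ 2 ^ (q - 1) • rescaledConjTop q τ⁻¹ := by
  have h1 := C_mul_C_inv hτ
  simp only [conj, Apair, ApairInv, Fbase, rescaledConjTop, if_neg hr0, if_neg (not_lt.mpr hqr),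
    comp, map_mul, map_pow, map_add, aeval_X, aeval_C, Matrix.cons_val_zero,
    Matrix.cons_val_one, algebraMap_eq, Prod.smul_mk, smul_eq_C_mul, Prod.mk.injEq]
  generalize hY : (X 0 - C τ⁻¹ * X 1 : MvPoly2) = Y
  obtain ⟨e, he⟩ : ∃ e, 2 ^ (q - 1) = e + 1 := Nat.exists_eq_add_one.mpr (Nat.two_pow_pos _)
  have hZ : (C τ * X 0 - X 1 : MvPoly2) = C τ * Y := by
    linear_combination (X 1 : MvPoly2) * h1 + C τ * hY
  rw [hZ, he, Nat.add_sub_cancel]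
  constructor
  · linear_combination (Y ^ e * X 1 ^ e * C τ ^ e *
        (C τ * Y ^ 2 + C τ * Y * X 1 + Y * X 1 - C τ⁻¹ * X 1 ^ 2)) * h1 +
      (Y ^ (e + 1) * X 1 ^ e * C τ ^ e) * hZ.symm
  · ring

end Families

section Limits

variable {α : Type*} {l : Filter α} {u : α → ℂ} {u₀ : ℂ}

lemma tendstoCoeffwise_X_sub_C_mul_X (hu : Tendsto u l (𝓝 u₀)) :
    TendstoCoeffwise l (fun x => (X 0 - C (u x) * X 1 : MvPoly2)) (X 0 - C u₀ * X 1) :=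
  (TendstoCoeffwise.const _).sub ((TendstoCoeffwise.C hu).mul (.const _))

lemma pairTendsto_rescaledConjLow (r : ℕ) (hu : Tendsto u l (𝓝 u₀)) :
    PairTendsto l (fun x => rescaledConjLow r (u x)) (rescaledConjLow r u₀) :=
  ⟨((tendstoCoeffwise_X_sub_C_mul_X hu).mul (.const _)).pow _, .const _⟩

lemma pairTendsto_rescaledConjTop (q : ℕ) (hu : Tendsto u l (𝓝 u₀)) :
    PairTendsto l (fun x => rescaledConjTop q (u x)) (rescaledConjTop q u₀) := by
  have hY := tendstoCoeffwise_X_sub_C_mul_X hu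
  exact ⟨((hY.mul (.const _)).pow _).mul ((hY.mul (.const _)).add
      (((TendstoCoeffwise.C hu).pow 2).mul (.const _))), (hY.mul (.const _)).pow _⟩

end Limits

lemma Pbase_of_lt {q r : ℕ} (hr0 : r ≠ 0) (hrq : r < q) : Pbase q r = rescaledConjLow r 0 := by
  simp only [Pbase, rescaledConjLow, if_neg hr0, if_pos hrq, map_zero, zero_mul, sub_zero,
    mul_pow]

lemma Pbase_of_le {q r : ℕ} (hr0 : r ≠ 0) (hqr : q ≤ r) : Pbase q r = rescaledConjTop q 0 := by
  obtain ⟨e, he⟩ : ∃ e, 2 ^ (q - 1) = e + 1 := Nat.exists_eq_add_one.mpr (Nat.two_pow_pos _)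
  simp only [Pbase, rescaledConjTop, if_neg hr0, if_neg (not_lt.mpr hqr), he, Nat.add_sub_cancel,
    map_zero, zero_mul, sub_zero, Prod.mk.injEq]
  constructor <;> ring

lemma projTendsto_conj_Fbase (q r : ℕ) :
    ProjTendsto (cobounded ℂ) (fun τ => conj (Apair τ) (ApairInv τ) (Fbase q τ r))
      (Pbase q r) := by
  have hinv : Tendsto (fun τ : ℂ => τ⁻¹) (cobounded ℂ) (𝓝 0) := tendsto_inv₀_cobounded
  by_cases hr0 : r = 0
  · rw [show Pbase q r = idPair from if_pos hr0]
    refine .of_eventually_eq_smul (c := fun _ => 1) (g := fun _ => idPair) ?_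
      ⟨.const _, .const _⟩
    filter_upwards [eventually_ne_cobounded 0] with τ hτ
    rw [Fbase, if_pos hr0, one_smul, conj, idPair_comp, comp_Apair_ApairInv hτ]
    exact ⟨one_ne_zero, rfl⟩
  by_cases hrq : r < q
  · rw [Pbase_of_lt hr0 hrq]
    refine .of_eventually_eq_smul (c := fun τ => τ ^ (2 ^ (r - 1) - 1)) ?_
      (pairTendsto_rescaledConjLow r hinv)
    filter_upwards [eventually_ne_cobounded 0] with τ hτ
    exact ⟨pow_ne_zero _ hτ, conj_Fbase_of_lt hr0 hrq hτ⟩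
  · rw [Pbase_of_le hr0 (not_lt.mp hrq)]
    refine .of_eventually_eq_smul (c := fun τ => τ ^ 2 ^ (q - 1)) ?_
      (pairTendsto_rescaledConjTop q hinv)
    filter_upwards [eventually_ne_cobounded 0] with τ hτ
    exact ⟨pow_ne_zero _ hτ, conj_Fbase_of_le hr0 (not_lt.mp hrq) hτ⟩

lemma projTendsto_conj_FF (q n : ℕ) :
    ProjTendsto (cobounded ℂ) (fun τ => conj (Apair τ) (ApairInv τ) (FF q τ n)) (PP q n) := by
  unfold FF PP
  split_ifs
  · exact projTendsto_conj_Fbase q n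
  obtain ⟨d, hd⟩ := exists_isHomogeneousPair_conj_Fbase q (n % q)
  obtain ⟨e, he⟩ := exists_isHomogeneousPair_conj_Fbase q q
  refine ((projTendsto_conj_Fbase q (n % q)).comp (.of_forall hd)
    ((projTendsto_conj_Fbase q q).iter (.of_forall he) (n / q))).congr' ?_
  filter_upwards [eventually_ne_cobounded 0] with τ hτ
  rw [conj_comp (comp_ApairInv_Apair hτ),
    conj_iter (comp_Apair_ApairInv hτ) (comp_ApairInv_Apair hτ)]

theorem FF_tendsto_PP_general (q n : ℕ) :
    ∃ lam : ℂ → ℂ, (∀ τ : ℂ, τ ≠ 0 → lam τ ≠ 0) ∧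
      ∀ m : Fin 2 →₀ ℕ,
        Filter.Tendsto
            (fun τ : ℂ =>
              coeff m (lam τ • (comp (Apair τ) (comp (FF q τ n) (ApairInv τ))).1))
            (Filter.comap (fun τ : ℂ => ‖τ‖) Filter.atTop)
            (nhds (coeff m (PP q n).1)) ∧
        Filter.Tendsto
            (fun τ : ℂ =>
              coeff m (lam τ • (comp (Apair τ) (comp (FF q τ n) (ApairInv τ))).2))
            (Filter.comap (fun τ : ℂ => ‖τ‖) Filter.atTop)
            (nhds (coeff m (PP q n).2)) := by
  obtain ⟨lam, hlam, h1, h2⟩ := projTendsto_conj_FF q n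
  rw [comap_norm_atTop]
  exact ⟨lam, fun τ _ => hlam τ, fun m => ⟨h1 m, h2 m⟩⟩

/-- For `n ≥ q ≥ 2` there are nonzero scalars `λ_τ` such that every coefficient of
`λ_τ • (A_τ ∘ F_{q,τ,n} ∘ A_τ⁻¹)` converges, as `|τ| → ∞`, to the corresponding
coefficient of `P_{q,n}`. -/
theorem FF_tendsto_PP (q n : ℕ) (hq : 2 ≤ q) (hn : q ≤ n) :
    ∃ lam : ℂ → ℂ, (∀ τ : ℂ, τ ≠ 0 → lam τ ≠ 0) ∧
      ∀ m : Fin 2 →₀ ℕ,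
        Filter.Tendsto
            (fun τ : ℂ =>
              coeff m (lam τ • (comp (Apair τ) (comp (FF q τ n) (ApairInv τ))).1))
            (Filter.comap (fun τ : ℂ => ‖τ‖) Filter.atTop)
            (nhds (coeff m (PP q n).1)) ∧
        Filter.Tendsto
            (fun τ : ℂ =>
              coeff m (lam τ • (comp (Apair τ) (comp (FF q τ n) (ApairInv τ))).2))
            (Filter.comap (fun τ : ℂ => ‖τ‖) Filter.atTop)
            (nhds (coeff m (PP q n).2)) :=
  FF_tendsto_PP_general q n
end
end

section
/- With d, P, g, and f_a as in the context: (i) for every a ∈ ℂ, the degree-d² pair f_a is stable; (ii) there exist a, b ∈ ℂ such that f_a and f_b are not conjugate (so a ↦ [f_a] ∈ Mbar_{d²} is non-constant). -/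
noncomputable section

open MvPolynomial

/-- The pair `g = (w P, 0)` of degree `d`. -/
def gP (P : MvPoly2) : Pair := (X 1 * P, 0)

/-- The pair `f_a = (w^{d-1} P^{d-1} (a w P + z^d), w^d P^d)` of degree `d²`,
the limit of the second iterates of the family `g_{a,t}`. -/
def fa (d : ℕ) (P : MvPoly2) (a : ℂ) : Pair :=
  (X 1 ^ (d - 1) * P ^ (d - 1) * (C a * X 1 * P + X 0 ^ d), X 1 ^ d * P ^ d)


/-!
The holes of `f_a` lie at `w = 0` and at the roots of `P`. Since the roots of `P` are simple and
`z^d` is prime to `w P`, each has depth exactly `d - 1`, well below the stability cutoff of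
about `d² / 2`: this is (i).

For (ii), the fixed form `z Q - w P` of `f_a` factors as
`(w P)^(d-1) · w · (z (P - z^(d-1)) - a w P)`, and the last factor is divisible by `w²` exactly
when `a` is the coefficient `c` of `z^(d-2) w` in `P`. So some linear form divides the fixed
form of `f_c` to the power `d + 2`, whereas for `a ≠ c` none does: at `w` and at the roots of `P`
the multiplicity is smaller, and any other linear form would have to divide a form of degree
`d + 1` to the power `d + 2`. Conjugating by `A` multiplies the fixed form by a constant and
substitutes `A⁻¹`, which maps linear forms to linear forms, so this property is a conjugacy
invariant.
-/

namespace MvPolynomial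

theorem X_pow_dvd_iff {σ R : Type*} [CommSemiring R] {i : σ} {k : ℕ} {p : MvPolynomial σ R} :
    X i ^ k ∣ p ↔ ∀ m : σ →₀ ℕ, m i < k → coeff m p = 0 := by
  classical
  rw [X_pow_eq_monomial, monomial_one_dvd_iff_modMonomial_eq_zero, MvPolynomial.ext_iff]
  refine forall_congr' fun m => ?_
  by_cases hm : k ≤ m i
  · simp [coeff_modMonomial_of_le _ (Finsupp.single_le_iff.mpr hm), hm]
  · rw [coeff_modMonomial_of_not_le _ (by rwa [Finsupp.single_le_iff])]
    simp [not_le.mp hm]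

theorem prime_of_totalDegree_eq_one {σ K : Type*} [Field K] {p : MvPolynomial σ K}
    (hp : p.totalDegree = 1) : Prime p := by
  obtain ⟨m, hm⟩ := ne_zero_iff.mp (fun h : p = 0 => by simp [h] at hp)
  refine (irreducible_of_totalDegree_eq_one hp fun x hx => ?_).prime
  exact isUnit_iff_ne_zero.mpr (ne_zero_of_dvd_ne_zero hm (hx m))

end MvPolynomial

theorem Prime.le_add_of_pow_dvd_pow_mul {M : Type*} [CommMonoidWithZero M] [IsCancelMulZero M]
    {p a r : M} {n k j : ℕ} (hp : Prime p) (ha : ¬ p ^ 2 ∣ a) (hr : ¬ p ^ (j + 1) ∣ r)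
    (h : p ^ n ∣ a ^ k * r) : n ≤ k + j := by
  have ha' : emultiplicity p a ≤ 1 :=
    Order.le_of_lt_add_one (emultiplicity_lt_iff_not_dvd.mpr ha)
  have hr' : emultiplicity p r ≤ j :=
    Order.le_of_lt_add_one (mod_cast emultiplicity_lt_iff_not_dvd.mpr hr)
  have hn := le_emultiplicity_of_pow_dvd h
  rw [emultiplicity_mul hp, emultiplicity_pow hp] at hn
  have : (n : ℕ∞) ≤ k + j :=
    hn.trans (add_le_add (by simpa using mul_le_mul_right ha' (k : ℕ∞)) hr')
  exact_mod_cast this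

lemma linForm_isHomogeneous (v : ℂ × ℂ) : (linForm v).IsHomogeneous 1 :=
  (isHomogeneous_C_mul_X _ _).sub (isHomogeneous_C_mul_X _ _)

lemma linForm_eq_zero_iff {v : ℂ × ℂ} : linForm v = 0 ↔ v = 0 := by
  refine ⟨fun h => ?_, fun h => by simp [h, linForm]⟩
  have h₁ := congrArg (eval ![1, 0]) h
  have h₂ := congrArg (eval ![0, 1]) h
  simp only [linForm, map_sub, map_mul, eval_C, eval_X, map_zero, Matrix.cons_val_zero,
    Matrix.cons_val_one, Matrix.cons_val_fin_one, mul_one, mul_zero, sub_zero, zero_sub,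
    neg_eq_zero] at h₁ h₂
  exact Prod.ext h₂ h₁

lemma prime_linForm {v : ℂ × ℂ} (hv : v ≠ 0) : Prime (linForm v) :=
  prime_of_totalDegree_eq_one <|
    (linForm_isHomogeneous v).totalDegree (linForm_eq_zero_iff.not.mpr hv)

lemma le_of_linForm_pow_dvd {v : ℂ × ℂ} (hv : v ≠ 0) {q : MvPoly2} {n k : ℕ}
    (hq : q.IsHomogeneous n) (hq0 : q ≠ 0) (h : linForm v ^ k ∣ q) : k ≤ n := by
  have hLk := (linForm_isHomogeneous v).pow k
  rw [one_mul] at hLk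
  rw [← hLk.totalDegree (pow_ne_zero k (linForm_eq_zero_iff.not.mpr hv)), ← hq.totalDegree hq0]
  exact totalDegree_le_of_dvd_of_isDomain h hq0

def linSubst (M : Matrix (Fin 2) (Fin 2) ℂ) : MvPoly2 →ₐ[ℂ] MvPoly2 :=
  aeval ![(matPair M).1, (matPair M).2]

@[simp] lemma linSubst_X_zero (M : Matrix (Fin 2) (Fin 2) ℂ) :
    linSubst M (X 0) = C (M 0 0) * X 0 + C (M 0 1) * X 1 := by
  simp [linSubst, matPair]

@[simp] lemma linSubst_X_one (M : Matrix (Fin 2) (Fin 2) ℂ) :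
    linSubst M (X 1) = C (M 1 0) * X 0 + C (M 1 1) * X 1 := by
  simp [linSubst, matPair]

lemma linSubst_linSubst (M N : Matrix (Fin 2) (Fin 2) ℂ) (p : MvPoly2) :
    linSubst N (linSubst M p) = linSubst (M * N) p := by
  rw [← AlgHom.comp_apply]
  congr 1
  refine algHom_ext fun i => ?_
  fin_cases i <;>
    simp [Matrix.mul_apply, Fin.sum_univ_two, algebraMap_eq] <;> ring

lemma linSubst_one (p : MvPoly2) : linSubst 1 p = p := by
  rw [← AlgHom.id_apply (R := ℂ) p]
  congr 1
  refine algHom_ext fun i => ?_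
  fin_cases i <;> simp

lemma linSubst_linForm (N : Matrix (Fin 2) (Fin 2) ℂ) (v : ℂ × ℂ) :
    linSubst N (linForm v) =
      linForm (v.1 * N 1 1 - v.2 * N 0 1, v.2 * N 0 0 - v.1 * N 1 0) := by
  simp only [linForm, map_sub, map_mul, algHom_C, algebraMap_eq, linSubst_X_zero,
    linSubst_X_one]
  ring

lemma comp_matPair_left (M : Matrix (Fin 2) (Fin 2) ℂ) (q : Pair) :
    comp (matPair M) q =
      (C (M 0 0) * q.1 + C (M 0 1) * q.2, C (M 1 0) * q.1 + C (M 1 1) * q.2) := by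
  simp [comp, matPair, algebraMap_eq]

lemma comp_matPair_right (f : Pair) (N : Matrix (Fin 2) (Fin 2) ℂ) :
    comp f (matPair N) = (linSubst N f.1, linSubst N f.2) := rfl

lemma fixedForm_smul (c : ℂ) (f : Pair) : fixedForm (c • f) = C c * fixedForm f := by
  simp only [fixedForm, Prod.smul_fst, Prod.smul_snd, smul_eq_C_mul]
  ring

-- As `M * N = 1`, each `X i` is `linSubst N` of the `i`-th row of `M`, so `linSubst N` can be
-- pulled out of the whole fixed form.
lemma fixedForm_matPair_comp_comp {M N : Matrix (Fin 2) (Fin 2) ℂ} (hMN : M * N = 1)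
    (f : Pair) :
    fixedForm (comp (matPair M) (comp f (matPair N))) = C M.det * linSubst N (fixedForm f) := by
  have hX : ∀ i, (X i : MvPoly2) = linSubst N (linSubst M (X i)) := fun i => by
    rw [linSubst_linSubst, hMN, linSubst_one]
  rw [fixedForm, comp_matPair_left, comp_matPair_right]
  conv_lhs => rw [hX 0, hX 1]
  simp only [fixedForm, Matrix.det_fin_two, linSubst_X_zero, linSubst_X_one, map_add, map_sub,
    map_mul, algHom_C, algebraMap_eq]
  ring

lemma Conjugate.exists_linForm_pow_dvd_fixedForm {f g : Pair} (hfg : Conjugate f g) {k : ℕ}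
    {v : ℂ × ℂ} (hv : v ≠ 0) (h : linForm v ^ k ∣ fixedForm f) :
    ∃ v' : ℂ × ℂ, v' ≠ 0 ∧ linForm v' ^ k ∣ fixedForm g := by
  obtain ⟨A, c, -, rfl⟩ := hfg
  set M : Matrix (Fin 2) (Fin 2) ℂ := ↑A
  set N : Matrix (Fin 2) (Fin 2) ℂ := ↑A⁻¹
  have hMN : M * N = 1 := A.mul_inv
  have hNM : N * M = 1 := A.inv_mul
  refine ⟨(v.1 * N 1 1 - v.2 * N 0 1, v.2 * N 0 0 - v.1 * N 1 0), fun h0 => hv ?_, ?_⟩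
  · have h' := congrArg (linSubst M) (linSubst_linForm N v)
    rw [h0, linSubst_linSubst, hNM, linSubst_one, linForm_eq_zero_iff.mpr rfl, map_zero] at h'
    exact linForm_eq_zero_iff.mp h'
  · rw [← linSubst_linForm, fixedForm_smul, fixedForm_matPair_comp_comp hMN, ← map_pow]
    exact ((map_dvd _ h).mul_left _).mul_left _

lemma stable_of_forall_two_mul_depth_add_one_lt {D : ℕ} {f : Pair} (hf : f ≠ 0)
    (h : ∀ v : ℂ × ℂ, v ≠ 0 → 2 * depth v f + 1 < D) : Stable D f := by
  have stableAt_of_depth_lt : ∀ m, (∀ v : ℂ × ℂ, v ≠ 0 → depth v f < m) → StableAt m f :=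
    fun m hm => ⟨hf, fun v hv => ⟨(hm v hv).le, fun _ heq => absurd heq (hm v hv).ne⟩⟩
  unfold Stable
  split_ifs
  · exact stableAt_of_depth_lt _ fun v hv => by have := h v hv; omega
  · exact stableAt_of_depth_lt _ fun v hv => by have := h v hv; omega

def fixedCofactor (d : ℕ) (P : MvPoly2) (a : ℂ) : MvPoly2 :=
  X 0 * P - X 0 ^ d - C a * X 1 * P

section
variable {d : ℕ} {P : MvPoly2}

lemma fixedForm_fa (hd : 1 ≤ d) (a : ℂ) :
    fixedForm (fa d P a) = (X 1 * P) ^ (d - 1) * (X 1 * fixedCofactor d P a) := by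
  obtain ⟨e, rfl⟩ : ∃ e, d = e + 1 := ⟨d - 1, by omega⟩
  simp only [fixedForm, fa, fixedCofactor, Nat.add_sub_cancel]
  ring

lemma fixedCofactor_isHomogeneous (hd : 1 ≤ d) (hP : P.IsHomogeneous (d - 1)) (a : ℂ) :
    (fixedCofactor d P a).IsHomogeneous d := by
  have hXP : (X 0 * P).IsHomogeneous d := by
    simpa [Nat.add_sub_cancel' hd] using (isHomogeneous_X ℂ (0 : Fin 2)).mul hP
  have hwP : (C a * X 1 * P).IsHomogeneous d := by
    simpa [Nat.add_sub_cancel' hd] using (isHomogeneous_C_mul_X a (1 : Fin 2)).mul hP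
  exact (hXP.sub ((isHomogeneous_X_pow (0 : Fin 2) d))).sub hwP

lemma coeff_fixedCofactor_single (hd : 1 ≤ d)
    (hmonic : coeff (Finsupp.single 0 (d - 1)) P = 1) (a : ℂ) :
    coeff (Finsupp.single 0 d) (fixedCofactor d P a) = 0 := by
  have hm : Finsupp.single (0 : Fin 2) d = Finsupp.single 0 1 + Finsupp.single 0 (d - 1) := by
    rw [← Finsupp.single_add, Nat.add_sub_cancel' hd]
  rw [fixedCofactor, coeff_sub, coeff_sub, mul_assoc, coeff_C_mul, coeff_X_pow, hm, coeff_X_mul,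
    hmonic, coeff_X_mul']
  simp

lemma coeff_fixedCofactor_single_add_single (hd : 2 ≤ d)
    (hmonic : coeff (Finsupp.single 0 (d - 1)) P = 1) (a : ℂ) :
    coeff (Finsupp.single 0 (d - 1) + Finsupp.single 1 1) (fixedCofactor d P a) =
      coeff (Finsupp.single 0 (d - 2) + Finsupp.single 1 1) P - a := by
  have h₀ : Finsupp.single (0 : Fin 2) (d - 1) + Finsupp.single 1 1 =
      Finsupp.single 0 1 + (Finsupp.single 0 (d - 2) + Finsupp.single 1 1) := by
    rw [← add_assoc, ← Finsupp.single_add, show 1 + (d - 2) = d - 1 by omega]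
  have h₁ : Finsupp.single (0 : Fin 2) (d - 1) + Finsupp.single 1 1 =
      Finsupp.single 1 1 + Finsupp.single 0 (d - 1) := add_comm _ _
  have hne : Finsupp.single (0 : Fin 2) d ≠ Finsupp.single 0 (d - 1) + Finsupp.single 1 1 :=
    fun h => by simpa using DFunLike.congr_fun h 1
  rw [fixedCofactor, coeff_sub, coeff_sub, mul_assoc, coeff_C_mul, coeff_X_pow, if_neg hne,
    h₀, coeff_X_mul, ← h₀, h₁, coeff_X_mul, hmonic]
  ring

lemma X_one_sq_dvd_fixedCofactor_iff (hd : 2 ≤ d) (hP : P.IsHomogeneous (d - 1))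
    (hmonic : coeff (Finsupp.single 0 (d - 1)) P = 1) (a : ℂ) :
    X 1 ^ 2 ∣ fixedCofactor d P a ↔
      a = coeff (Finsupp.single 0 (d - 2) + Finsupp.single 1 1) P := by
  rw [X_pow_dvd_iff]
  constructor
  · intro h
    have := h (Finsupp.single 0 (d - 1) + Finsupp.single 1 1) (by simp)
    rw [coeff_fixedCofactor_single_add_single hd hmonic] at this
    exact (sub_eq_zero.mp this).symm
  · rintro rfl m hm
    by_contra hne
    have hdeg := (fixedCofactor_isHomogeneous (by omega) hP _) hne
    simp only [Finsupp.weight_apply, Finsupp.sum_fintype, Fin.sum_univ_two, smul_eq_mul,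
      Pi.one_apply, mul_one, implies_true] at hdeg
    rcases (show m 1 = 0 ∨ m 1 = 1 by omega) with h1 | h1
    · have : m = Finsupp.single 0 d := by ext i; fin_cases i <;> simp [h1]; omega
      exact hne (this ▸ coeff_fixedCofactor_single (by omega) hmonic _)
    · have : m = Finsupp.single 0 (d - 1) + Finsupp.single 1 1 := by
        ext i; fin_cases i <;> simp [h1]; omega
      exact hne (by rw [this, coeff_fixedCofactor_single_add_single hd hmonic, sub_self])

lemma not_X_one_dvd_of_coeff_eq_one (hmonic : coeff (Finsupp.single 0 (d - 1)) P = 1) :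
    ¬ X 1 ∣ P := by
  rw [← pow_one (X 1 : MvPoly2), X_pow_dvd_iff]
  intro h
  exact one_ne_zero (hmonic ▸ h (Finsupp.single 0 (d - 1)) (by simp))

lemma not_X_zero_dvd_of_eval_ne_zero (hP01 : eval ![0, 1] P ≠ 0) : ¬ X 0 ∣ P := by
  rintro ⟨q, rfl⟩
  simp at hP01

lemma not_linForm_sq_dvd_X_one_mul (hmonic : coeff (Finsupp.single 0 (d - 1)) P = 1)
    (hdistinct : ∀ v : ℂ × ℂ, v ≠ 0 → ¬ linForm v ^ 2 ∣ P) {v : ℂ × ℂ} (hv : v ≠ 0) :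
    ¬ linForm v ^ 2 ∣ X 1 * P := by
  intro h
  have hL := prime_linForm hv
  by_cases hw : linForm v ∣ X 1
  · have hLP : ¬ linForm v ∣ P := fun hP => not_X_one_dvd_of_coeff_eq_one hmonic
      ((hL.associated_of_dvd (X_prime (i := 1)) hw).dvd_iff_dvd_left.mp hP)
    exact hL.not_isUnit <| (X_prime (i := 1)).squarefree _ <| by
      rw [← sq]; exact hL.pow_dvd_of_dvd_mul_right 2 hLP h
  · exact hdistinct v hv (hL.pow_dvd_of_dvd_mul_left 2 hw h)

lemma not_linForm_dvd_X_zero (hP01 : eval ![0, 1] P ≠ 0) {v : ℂ × ℂ} (hv : v ≠ 0)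
    (h : linForm v ∣ X 1 * P) : ¬ linForm v ∣ X 0 := by
  intro h0
  have hX0 := (prime_linForm hv).associated_of_dvd (X_prime (i := 0)) h0
  rcases (X_prime (i := 0)).dvd_or_dvd (hX0.dvd_iff_dvd_left.mp h) with h1 | h1
  · rw [← pow_one (X 0 : MvPoly2), X_pow_dvd_iff] at h1
    simpa using h1 (Finsupp.single 1 1) (by simp)
  · exact not_X_zero_dvd_of_eval_ne_zero hP01 h1

lemma depth_fa_le (hmonic : coeff (Finsupp.single 0 (d - 1)) P = 1)
    (hdistinct : ∀ v : ℂ × ℂ, v ≠ 0 → ¬ linForm v ^ 2 ∣ P) (hP01 : eval ![0, 1] P ≠ 0)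
    (a : ℂ) {v : ℂ × ℂ} (hv : v ≠ 0) : depth v (fa d P a) ≤ d - 1 := by
  refine csSup_le ⟨0, by simp⟩ fun n ⟨h₁, h₂⟩ => ?_
  have hL := prime_linForm hv
  have h₁' : linForm v ^ n ∣ (X 1 * P) ^ (d - 1) * (C a * (X 1 * P) + X 0 ^ d) := by
    convert h₁ using 1
    simp only [fa]
    ring
  have h₂' : linForm v ^ n ∣ (X 1 * P) ^ d := by simpa [fa, mul_pow] using h₂
  by_cases hs : linForm v ∣ X 1 * P
  · refine (hL.le_add_of_pow_dvd_pow_mul (j := 0)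
      (not_linForm_sq_dvd_X_one_mul hmonic hdistinct hv) ?_ h₁').trans_eq (add_zero _)
    rw [zero_add, pow_one]
    intro hQ
    exact not_linForm_dvd_X_zero hP01 hv hs
      (hL.dvd_of_dvd_pow ((dvd_add_right (hs.mul_left _)).mp hQ))
  · obtain _ | n := n
    · exact Nat.zero_le _
    · exact absurd (hL.dvd_of_dvd_pow ((dvd_pow_self _ n.succ_ne_zero).trans h₂')) hs

lemma stable_fa (hd : 2 ≤ d) (hmonic : coeff (Finsupp.single 0 (d - 1)) P = 1)
    (hdistinct : ∀ v : ℂ × ℂ, v ≠ 0 → ¬ linForm v ^ 2 ∣ P) (hP01 : eval ![0, 1] P ≠ 0)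
    (a : ℂ) : Stable (d ^ 2) (fa d P a) := by
  have hP0 : P ≠ 0 := by
    rintro rfl
    simp at hmonic
  refine stable_of_forall_two_mul_depth_add_one_lt (fun h => ?_) fun v hv => ?_
  · have := congrArg Prod.snd h
    simp [fa, hP0] at this
  · have := depth_fa_le hmonic hdistinct hP01 a hv
    have : 2 * d ≤ d ^ 2 := by nlinarith
    omega

lemma X_one_pow_dvd_fixedForm_fa (hd : 2 ≤ d) (hP : P.IsHomogeneous (d - 1))
    (hmonic : coeff (Finsupp.single 0 (d - 1)) P = 1) :
    X 1 ^ (d + 2) ∣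
      fixedForm (fa d P (coeff (Finsupp.single 0 (d - 2) + Finsupp.single 1 1) P)) := by
  rw [fixedForm_fa (by omega), show d + 2 = (d - 1) + (1 + 2) by omega, pow_add, pow_add,
    pow_one]
  exact mul_dvd_mul (pow_dvd_pow_of_dvd (dvd_mul_right _ _) _)
    (mul_dvd_mul_left _ ((X_one_sq_dvd_fixedCofactor_iff hd hP hmonic _).mpr rfl))

lemma not_linForm_cube_dvd_X_one_mul_fixedCofactor (hd : 2 ≤ d) (hP : P.IsHomogeneous (d - 1))
    (hmonic : coeff (Finsupp.single 0 (d - 1)) P = 1) (hP01 : eval ![0, 1] P ≠ 0) {b : ℂ}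
    (hb : b ≠ coeff (Finsupp.single 0 (d - 2) + Finsupp.single 1 1) P) {v : ℂ × ℂ}
    (hv : v ≠ 0) (hs : linForm v ∣ X 1 * P) :
    ¬ linForm v ^ 3 ∣ X 1 * fixedCofactor d P b := by
  intro h
  have hL := prime_linForm hv
  by_cases hw : linForm v ∣ X 1
  · have h' :=
      ((hL.associated_of_dvd (X_prime (i := 1)) hw).pow_pow (n := 3)).dvd_iff_dvd_left.mp h
    rw [pow_succ', mul_dvd_mul_iff_left (X_ne_zero 1)] at h'
    exact hb ((X_one_sq_dvd_fixedCofactor_iff hd hP hmonic b).mp h')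
  · have hLP : linForm v ∣ P := (hL.dvd_or_dvd hs).resolve_left hw
    have hX0 : X 0 ^ d = X 0 * P - C b * X 1 * P - fixedCofactor d P b := by
      rw [fixedCofactor]
      ring
    have hG : ¬ linForm v ∣ fixedCofactor d P b := fun hG =>
      not_linForm_dvd_X_zero hP01 hv hs <| hL.dvd_of_dvd_pow <| hX0 ▸
        dvd_sub (dvd_sub (hLP.mul_left _) (hLP.mul_left _)) hG
    exact (hL.dvd_or_dvd ((dvd_pow_self _ three_ne_zero).trans h)).elim hw hG

lemma not_linForm_pow_dvd_fixedForm_fa (hd : 2 ≤ d) (hP : P.IsHomogeneous (d - 1))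
    (hmonic : coeff (Finsupp.single 0 (d - 1)) P = 1)
    (hdistinct : ∀ v : ℂ × ℂ, v ≠ 0 → ¬ linForm v ^ 2 ∣ P) (hP01 : eval ![0, 1] P ≠ 0)
    {b : ℂ} (hb : b ≠ coeff (Finsupp.single 0 (d - 2) + Finsupp.single 1 1) P) {v : ℂ × ℂ}
    (hv : v ≠ 0) : ¬ linForm v ^ (d + 2) ∣ fixedForm (fa d P b) := by
  rw [fixedForm_fa (by omega)]
  intro h
  have hL := prime_linForm hv
  by_cases hs : linForm v ∣ X 1 * P
  · have := hL.le_add_of_pow_dvd_pow_mul (not_linForm_sq_dvd_X_one_mul hmonic hdistinct hv)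
      (not_linForm_cube_dvd_X_one_mul_fixedCofactor hd hP hmonic hP01 hb hv hs) h
    omega
  · have h' := hL.pow_dvd_of_dvd_mul_left _ (fun h => hs (hL.dvd_of_dvd_pow h)) h
    have hG0 : X 1 * fixedCofactor d P b ≠ 0 := mul_ne_zero (X_ne_zero 1) fun h0 =>
      hb ((X_one_sq_dvd_fixedCofactor_iff hd hP hmonic b).mp (h0 ▸ dvd_zero _))
    have := le_of_linForm_pow_dvd hv
      ((isHomogeneous_X ℂ 1).mul (fixedCofactor_isHomogeneous (by omega) hP b)) hG0 h'
    omega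

end

/-- With `P` homogeneous of degree `d-1`, monic in `z`, with distinct roots and
`P(0,1) ≠ 0`: (i) every `f_a` is stable; (ii) not all `f_a` are conjugate. -/
theorem fa_stable_and_nonconstant (d : ℕ) (hd : 2 ≤ d) (P : MvPoly2)
    (hP : P.IsHomogeneous (d - 1))
    (hmonic : coeff (Finsupp.single 0 (d - 1)) P = 1)
    (hdistinct : ∀ v : ℂ × ℂ, v ≠ 0 → ¬ linForm v ^ 2 ∣ P)
    (hP01 : eval ![0, 1] P ≠ 0) :
    (∀ a : ℂ, Stable (d ^ 2) (fa d P a)) ∧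
    (∃ a b : ℂ, ¬ Conjugate (fa d P a) (fa d P b)) := by
  refine ⟨stable_fa hd hmonic hdistinct hP01, ?_⟩
  set c := coeff (Finsupp.single 0 (d - 2) + Finsupp.single 1 1) P
  refine ⟨c, c + 1, fun hconj => ?_⟩
  have hw : linForm (-1, 0) = X 1 := by simp [linForm]
  obtain ⟨v, hv, hdvd⟩ := hconj.exists_linForm_pow_dvd_fixedForm (v := (-1, 0)) (by simp)
    (hw ▸ X_one_pow_dvd_fixedForm_fa hd hP hmonic)
  exact not_linForm_pow_dvd_fixedForm_fa hd hP hmonic hdistinct hP01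
    (add_ne_left.mpr one_ne_zero) hv hdvd
end
end
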